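/- Let λ > 0, K > 0, and let u : ℝ → [0,∞) be a continuous Lebesgue-integrable function. Then for all x₁, x₂ ∈ [−K, K], |∫_ℝ g_λ(y − x₁) u(y) dy − ∫_ℝ g_λ(y − x₂) u(y) dy| ≤ (√(2λ)·∫_ℝ u(y) dy + 2·sup_{y∈[−K,K]} u(y))·|x₁ − x₂|. -/

import Mathlib

/-!
Off the segment `[[x₁, x₂]]` the points `y - x₁` and `y - x₂` have the same sign, and there
`g_λ = ∓exp(-√(2λ)|·|)` is `√(2λ)`-Lipschitz, since `exp` is `1`-Lipschitz on `(-∞, 0]`. On the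
segment `|g_λ| ≤ 1` gives the crude bound `2`. Integrating against `u ≥ 0`, the first region
contributes `√(2λ)|x₁ - x₂| ∫ u` and the second at most `2 |x₁ - x₂| sup_{[-K, K]} u`.
-/

open MeasureTheory Filter Set

/-- `g_λ(x) = -sgn(x) · exp(-√(2λ)·|x|)`. -/
noncomputable def gl (l : ℝ) (x : ℝ) : ℝ :=
  -Real.sign x * Real.exp (-Real.sqrt (2 * l) * |x|)

lemma Real.measurable_sign : Measurable Real.sign :=
  Measurable.ite (measurableSet_lt measurable_id measurable_const) measurable_const
    (Measurable.ite (measurableSet_lt measurable_const measurable_id)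
      measurable_const measurable_const)

lemma Real.abs_sign_le_one (x : ℝ) : |Real.sign x| ≤ 1 := by
  rcases Real.sign_apply_eq x with h | h | h <;> simp [h]

lemma Real.abs_exp_neg_sub_exp_neg_le {a b : ℝ} (ha : 0 ≤ a) (hb : 0 ≤ b) :
    |Real.exp (-a) - Real.exp (-b)| ≤ |a - b| := by
  wlog hab : a ≤ b generalizing a b
  · rw [abs_sub_comm, abs_sub_comm a]
    exact this hb ha (le_of_not_ge hab)
  have hfactor : Real.exp (-b) = Real.exp (-a) * Real.exp (a - b) := by
    rw [← Real.exp_add]; ring_nf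
  have htangent : 1 - (b - a) ≤ Real.exp (a - b) := by linarith [Real.add_one_le_exp (a - b)]
  have hle_one : Real.exp (-a) ≤ 1 := Real.exp_le_one_iff.2 (by linarith)
  have hanti : Real.exp (-b) ≤ Real.exp (-a) := Real.exp_le_exp.2 (by linarith)
  rw [abs_of_nonneg (sub_nonneg.2 hanti), abs_of_nonpos (by linarith), hfactor]
  nlinarith [Real.exp_pos (-a)]

section gl

variable (l : ℝ)

lemma measurable_gl : Measurable (gl l) :=
  Real.measurable_sign.neg.mul (Real.measurable_exp.comp (measurable_const.mul measurable_abs))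

lemma abs_gl_le_one (x : ℝ) : |gl l x| ≤ 1 := by
  rw [gl, abs_mul, abs_neg, Real.abs_exp]
  exact mul_le_one₀ (Real.abs_sign_le_one x) (Real.exp_pos _).le
    (Real.exp_le_one_iff.2 (by nlinarith [Real.sqrt_nonneg (2 * l), abs_nonneg x]))

lemma abs_gl_sub_gl_le_of_sign_eq {a b : ℝ} (h : Real.sign a = Real.sign b) :
    |gl l a - gl l b| ≤ Real.sqrt (2 * l) * |a - b| := by
  set c := Real.sqrt (2 * l)
  have hc : 0 ≤ c := Real.sqrt_nonneg _
  calc |gl l a - gl l b|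
      = |Real.sign b| * |Real.exp (-(c * |a|)) - Real.exp (-(c * |b|))| := by
        rw [gl, gl, h, neg_mul c, neg_mul c, ← mul_sub, abs_mul, abs_neg]
    _ ≤ 1 * |(c * |a| - c * |b|)| :=
        mul_le_mul (Real.abs_sign_le_one b)
          (Real.abs_exp_neg_sub_exp_neg_le (by positivity) (by positivity))
          (abs_nonneg _) zero_le_one
    _ = c * |(|a| - |b|)| := by rw [one_mul, ← mul_sub, abs_mul, abs_of_nonneg hc]
    _ ≤ c * |a - b| := mul_le_mul_of_nonneg_left (abs_abs_sub_abs_le_abs_sub a b) hc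

lemma abs_gl_sub_sub_gl_sub_le (x₁ x₂ y : ℝ) :
    |gl l (y - x₁) - gl l (y - x₂)|
      ≤ Real.sqrt (2 * l) * |x₁ - x₂| + 2 * (uIcc x₁ x₂).indicator 1 y := by
  by_cases hy : y ∈ uIcc x₁ x₂
  · rw [indicator_of_mem hy, Pi.one_apply]
    have := abs_sub (gl l (y - x₁)) (gl l (y - x₂))
    nlinarith [abs_gl_le_one l (y - x₁), abs_gl_le_one l (y - x₂), Real.sqrt_nonneg (2 * l),
      abs_nonneg (x₁ - x₂)]
  · rw [indicator_of_notMem hy, mul_zero, add_zero, ← abs_sub_comm x₂,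
      ← sub_sub_sub_cancel_left x₁ x₂ y]
    refine abs_gl_sub_gl_le_of_sign_eq l ?_
    rw [uIcc, mem_Icc, not_and_or, not_le, not_le] at hy
    rcases hy with hy | hy
    · rw [Real.sign_of_neg (by linarith [inf_le_left (a := x₁) (b := x₂)]),
        Real.sign_of_neg (by linarith [inf_le_right (a := x₁) (b := x₂)])]
    · rw [Real.sign_of_pos (by linarith [le_sup_left (a := x₁) (b := x₂)]),
        Real.sign_of_pos (by linarith [le_sup_right (a := x₁) (b := x₂)])]

end gl

section integral

variable (l : ℝ) {u : ℝ → ℝ}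

lemma integrable_gl_sub_mul (hu : Integrable u) (x : ℝ) :
    Integrable (fun y => gl l (y - x) * u y) :=
  hu.bdd_mul ((measurable_gl l).comp (measurable_id.sub_const x)).aestronglyMeasurable
    (Eventually.of_forall fun y => abs_gl_le_one l (y - x))

lemma abs_integral_gl_sub_mul_sub_le (hu_nonneg : ∀ y, 0 ≤ u y) (hu : Integrable u)
    (x₁ x₂ : ℝ) :
    |(∫ y, gl l (y - x₁) * u y) - ∫ y, gl l (y - x₂) * u y|
      ≤ Real.sqrt (2 * l) * |x₁ - x₂| * (∫ y, u y) + 2 * ∫ y in uIcc x₁ x₂, u y := by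
  set δ := Real.sqrt (2 * l) * |x₁ - x₂|
  have hbound : ∀ y, |gl l (y - x₁) * u y - gl l (y - x₂) * u y|
      ≤ δ * u y + 2 * (uIcc x₁ x₂).indicator u y := by
    intro y
    calc |gl l (y - x₁) * u y - gl l (y - x₂) * u y|
        = |gl l (y - x₁) - gl l (y - x₂)| * u y := by
          rw [← sub_mul, abs_mul, abs_of_nonneg (hu_nonneg y)]
      _ ≤ (δ + 2 * (uIcc x₁ x₂).indicator 1 y) * u y :=
          mul_le_mul_of_nonneg_right (abs_gl_sub_sub_gl_sub_le l x₁ x₂ y) (hu_nonneg y)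
      _ = δ * u y + 2 * (uIcc x₁ x₂).indicator u y := by
          by_cases hy : y ∈ uIcc x₁ x₂ <;> simp [hy, add_mul]
  have hu_ind : Integrable ((uIcc x₁ x₂).indicator u) := hu.indicator measurableSet_uIcc
  calc |(∫ y, gl l (y - x₁) * u y) - ∫ y, gl l (y - x₂) * u y|
      = |∫ y, (gl l (y - x₁) * u y - gl l (y - x₂) * u y)| := by
        rw [integral_sub (integrable_gl_sub_mul l hu x₁) (integrable_gl_sub_mul l hu x₂)]
    _ ≤ ∫ y, |gl l (y - x₁) * u y - gl l (y - x₂) * u y| := abs_integral_le_integral_abs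
    _ ≤ ∫ y, (δ * u y + 2 * (uIcc x₁ x₂).indicator u y) :=
        integral_mono ((integrable_gl_sub_mul l hu x₁).sub (integrable_gl_sub_mul l hu x₂)).abs
          ((hu.const_mul δ).add (hu_ind.const_mul 2)) hbound
    _ = δ * (∫ y, u y) + 2 * ∫ y in uIcc x₁ x₂, u y := by
        rw [integral_add (hu.const_mul δ) (hu_ind.const_mul 2), integral_const_mul,
          integral_const_mul, integral_indicator measurableSet_uIcc]

end integral

lemma setIntegral_uIcc_le_sSup_image_mul (K : ℝ) {u : ℝ → ℝ} (hu_cont : Continuous u)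
    (hu_nonneg : ∀ y, 0 ≤ u y) {x₁ x₂ : ℝ} (hx₁ : x₁ ∈ Icc (-K) K) (hx₂ : x₂ ∈ Icc (-K) K) :
    ∫ y in uIcc x₁ x₂, u y ≤ sSup (u '' Icc (-K) K) * |x₁ - x₂| := by
  have hle_sSup : ∀ y ∈ uIcc x₁ x₂, ‖u y‖ ≤ sSup (u '' Icc (-K) K) := fun y hy => by
    rw [Real.norm_of_nonneg (hu_nonneg y)]
    exact le_csSup (isCompact_Icc.bddAbove_image hu_cont.continuousOn)
      (mem_image_of_mem u (uIcc_subset_Icc hx₁ hx₂ hy))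
  calc ∫ y in uIcc x₁ x₂, u y ≤ ‖∫ y in uIcc x₁ x₂, u y‖ := le_abs_self _
    _ ≤ sSup (u '' Icc (-K) K) * volume.real (uIcc x₁ x₂) :=
        norm_setIntegral_le_of_norm_le_const (by simp [Real.volume_interval]) hle_sSup
    _ = sSup (u '' Icc (-K) K) * |x₁ - x₂| := by rw [Real.volume_real_interval, abs_sub_comm]

theorem integral_gl_density_increment_general (l : ℝ) (K : ℝ)
    (u : ℝ → ℝ) (hu_cont : Continuous u) (hu_nonneg : ∀ y, 0 ≤ u y)
    (hu_int : Integrable u) (x₁ x₂ : ℝ) (hx₁ : x₁ ∈ Set.Icc (-K) K)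
    (hx₂ : x₂ ∈ Set.Icc (-K) K) :
    |(∫ y, gl l (y - x₁) * u y) - ∫ y, gl l (y - x₂) * u y|
      ≤ (Real.sqrt (2 * l) * (∫ y, u y) + 2 * sSup (u '' Set.Icc (-K) K)) * |x₁ - x₂| :=
  calc |(∫ y, gl l (y - x₁) * u y) - ∫ y, gl l (y - x₂) * u y|
      ≤ Real.sqrt (2 * l) * |x₁ - x₂| * (∫ y, u y) + 2 * ∫ y in uIcc x₁ x₂, u y :=
        abs_integral_gl_sub_mul_sub_le l hu_nonneg hu_int x₁ x₂
    _ ≤ Real.sqrt (2 * l) * |x₁ - x₂| * (∫ y, u y)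
          + 2 * (sSup (u '' Icc (-K) K) * |x₁ - x₂|) := by
        gcongr
        exact setIntegral_uIcc_le_sSup_image_mul K hu_cont hu_nonneg hx₁ hx₂
    _ = (Real.sqrt (2 * l) * (∫ y, u y) + 2 * sSup (u '' Set.Icc (-K) K)) * |x₁ - x₂| := by ring

/-- Let `λ > 0`, `K > 0`, and `u : ℝ → [0,∞)` continuous and Lebesgue
integrable. Then for all `x₁, x₂ ∈ [−K, K]`,
`|∫ g_λ(y − x₁) u(y) dy − ∫ g_λ(y − x₂) u(y) dy|
  ≤ (√(2λ)·∫ u + 2·sup_{y ∈ [−K,K]} u(y))·|x₁ − x₂|`. -/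
theorem integral_gl_density_increment (l : ℝ) (hl : 0 < l) (K : ℝ) (hK : 0 < K)
    (u : ℝ → ℝ) (hu_cont : Continuous u) (hu_nonneg : ∀ y, 0 ≤ u y)
    (hu_int : Integrable u) (x₁ x₂ : ℝ) (hx₁ : x₁ ∈ Set.Icc (-K) K)
    (hx₂ : x₂ ∈ Set.Icc (-K) K) :
    |(∫ y, gl l (y - x₁) * u y) - ∫ y, gl l (y - x₂) * u y|
      ≤ (Real.sqrt (2 * l) * (∫ y, u y) + 2 * sSup (u '' Set.Icc (-K) K)) * |x₁ - x₂| :=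
  integral_gl_density_increment_general l K u hu_cont hu_nonneg hu_int x₁ x₂ hx₁ hx₂
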